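/- arXiv:0904.1397 — 6 statements merged into one kernel-verified Lean document; each statement's English description precedes it below -/
import Mathlib

section
/- Let Γ be a topological group and μ : Γ → ℝ a homogeneous quasi-morphism with defect constant C(μ). If |μ| is bounded by K on an open neighborhood U of the identity, then for every g ∈ Γ, every p ∈ ℕ with p ≥ 1, and every h ∈ Γ with hᵖ ∈ gᵖ·U, one has |μ(h) − μ(g)| ≤ (C(μ) + K)/p. -/
/-!
By homogeneity, `p * (μ h - μ g) = μ (g ^ p * u) - μ (g ^ p)`, and the quasi-morphism
inequality puts this within `C` of `μ u`, which is at most `K` in absolute value.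
-/

section QuasiMorphism

variable {G : Type*} {μ : G → ℝ} {C : ℝ}

lemma abs_sub_le_of_abs_defect_le [Mul G] (hquasi : ∀ x y : G, |μ (x * y) - μ x - μ y| ≤ C)
    (x y : G) : |μ (x * y) - μ x| ≤ C + |μ y| :=
  calc |μ (x * y) - μ x| = |(μ (x * y) - μ x - μ y) + μ y| := by ring_nf
    _ ≤ |μ (x * y) - μ x - μ y| + |μ y| := abs_add_le _ _
    _ ≤ C + |μ y| := by gcongr; exact hquasi x y

lemma map_pow_of_map_zpow [DivInvMonoid G] (hhom : ∀ (x : G) (n : ℤ), μ (x ^ n) = n * μ x)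
    (x : G) (n : ℕ) : μ (x ^ n) = n * μ x := by
  simpa using hhom x n

end QuasiMorphism

theorem shtern_estimate_general {Γ : Type*} [Group Γ]
    (μ : Γ → ℝ) (C K : ℝ)
    (hquasi : ∀ x y : Γ, |μ (x * y) - μ x - μ y| ≤ C)
    (hhom : ∀ (x : Γ) (n : ℤ), μ (x ^ n) = n * μ x)
    (U : Set Γ)
    (hK : ∀ u ∈ U, |μ u| ≤ K) :
    ∀ (g : Γ) (p : ℕ), 1 ≤ p → ∀ h : Γ, (∃ u ∈ U, h ^ p = g ^ p * u) →
      |μ h - μ g| ≤ (C + K) / p := by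
  rintro g p hp h ⟨u, hu, hpow⟩
  have hp_pos : (0 : ℝ) < p := by exact_mod_cast hp
  rw [le_div_iff₀ hp_pos]
  calc |μ h - μ g| * p = |μ (h ^ p) - μ (g ^ p)| := by
        rw [map_pow_of_map_zpow hhom, map_pow_of_map_zpow hhom, ← mul_sub, abs_mul,
          abs_of_pos hp_pos, mul_comm]
    _ = |μ (g ^ p * u) - μ (g ^ p)| := by rw [hpow]
    _ ≤ C + |μ u| := abs_sub_le_of_abs_defect_le hquasi _ _
    _ ≤ C + K := by gcongr; exact hK u hu

/-- The key estimate in Shtern's continuity criterion. -/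
theorem shtern_estimate {Γ : Type*} [Group Γ] [TopologicalSpace Γ] [IsTopologicalGroup Γ]
    (μ : Γ → ℝ) (C K : ℝ) (hC : 0 ≤ C)
    (hquasi : ∀ x y : Γ, |μ (x * y) - μ x - μ y| ≤ C)
    (hhom : ∀ (x : Γ) (n : ℤ), μ (x ^ n) = n * μ x)
    (U : Set Γ) (hUopen : IsOpen U) (hU1 : (1 : Γ) ∈ U)
    (hK : ∀ u ∈ U, |μ u| ≤ K) :
    ∀ (g : Γ) (p : ℕ), 1 ≤ p → ∀ h : Γ, (∃ u ∈ U, h ^ p = g ^ p * u) →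
      |μ h - μ g| ≤ (C + K) / p :=
  shtern_estimate_general μ C K hquasi hhom U hK
end

section
/- (Shtern) Let Γ be a topological group and μ : Γ → ℝ a homogeneous quasi-morphism. Then μ is continuous if and only if μ is bounded on some neighborhood of the identity. -/
/-!
Since `y ^ n = x ^ n * ((x ^ n)⁻¹ * y ^ n)`, homogeneity and the quasi-morphism inequality give
`n * |μ y - μ x| ≤ C + |μ ((x ^ n)⁻¹ * y ^ n)|`. The map `y ↦ (x ^ n)⁻¹ * y ^ n` is continuous and
sends `x` to `1`, so for `y` near `x` the last term is at most the bound `K` of `μ` near `1`; thus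
`|μ y - μ x| ≤ (C + K) / n` near `x`, for every `n`.
-/

open Filter Topology

section QuasiMorphism

variable {G : Type*} [Group G] {μ : G → ℝ}

lemma map_one_eq_zero_of_map_zpow (hhom : ∀ (x : G) (n : ℤ), μ (x ^ n) = n * μ x) :
    μ 1 = 0 := by
  simpa using hhom 1 0

lemma quasiMorphism_natCast_mul_abs_sub_le {C : ℝ} (hquasi : ∀ x y : G, |μ (x * y) - μ x - μ y| ≤ C)
    (hhom : ∀ (x : G) (n : ℤ), μ (x ^ n) = n * μ x) (x y : G) (n : ℕ) :
    n * |μ y - μ x| ≤ C + |μ ((x ^ n)⁻¹ * y ^ n)| := by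
  have hpow : ∀ z : G, μ (z ^ n) = n * μ z := fun z => by
    simpa using hhom z n
  have hdefect := hquasi (x ^ n) ((x ^ n)⁻¹ * y ^ n)
  rw [mul_inv_cancel_left, hpow, hpow] at hdefect
  rw [← abs_of_nonneg (Nat.cast_nonneg (α := ℝ) n), ← abs_mul, mul_sub]
  calc |n * μ y - n * μ x|
      = |(n * μ y - n * μ x - μ ((x ^ n)⁻¹ * y ^ n)) + μ ((x ^ n)⁻¹ * y ^ n)| := by
        rw [sub_add_cancel]
    _ ≤ C + |μ ((x ^ n)⁻¹ * y ^ n)| := (abs_add_le _ _).trans (by gcongr)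

end QuasiMorphism

lemma eventually_inv_pow_mul_pow_mem {G : Type*} [Group G] [TopologicalSpace G]
    [IsTopologicalGroup G] {U : Set G} (hU : U ∈ 𝓝 1) (x : G) (n : ℕ) :
    ∀ᶠ y in 𝓝 x, (x ^ n)⁻¹ * y ^ n ∈ U := by
  have hcont : Continuous fun y : G => (x ^ n)⁻¹ * y ^ n := by fun_prop
  exact hcont.continuousAt.preimage_mem_nhds (by simpa using hU)

theorem shtern_continuity_criterion_general {Γ : Type*} [Group Γ] [TopologicalSpace Γ]
    [IsTopologicalGroup Γ] (μ : Γ → ℝ) (C : ℝ)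
    (hquasi : ∀ x y : Γ, |μ (x * y) - μ x - μ y| ≤ C)
    (hhom : ∀ (x : Γ) (n : ℤ), μ (x ^ n) = n * μ x) :
    Continuous μ ↔ ∃ U ∈ nhds (1 : Γ), ∃ K : ℝ, ∀ x ∈ U, |μ x| ≤ K := by
  constructor
  · intro hcont
    have hμ1 := map_one_eq_zero_of_map_zpow hhom
    refine ⟨_, Metric.tendsto_nhds.mp (hcont.tendsto 1) 1 one_pos, 1, fun x hx => ?_⟩
    simp only [Set.mem_ofPred_eq, hμ1, Real.dist_eq, sub_zero] at hx
    exact hx.le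
  · rintro ⟨U, hU, K, hK⟩
    refine continuous_iff_continuousAt.mpr fun x => Metric.tendsto_nhds.mpr fun ε hε => ?_
    obtain ⟨n, hn⟩ := exists_nat_gt ((C + K) / ε)
    filter_upwards [eventually_inv_pow_mul_pow_mem hU x n] with y hy
    have hle := (quasiMorphism_natCast_mul_abs_sub_le hquasi hhom x y n).trans (add_le_add_right (hK _ hy) C)
    rw [div_lt_iff₀ hε] at hn
    rw [Real.dist_eq]
    by_contra! hfar
    linarith [mul_le_mul_of_nonneg_left hfar (Nat.cast_nonneg (α := ℝ) n)]

/-- (Shtern) A homogeneous quasi-morphism on a topological group is continuous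
iff it is bounded on some neighborhood of the identity. -/
theorem shtern_continuity_criterion {Γ : Type*} [Group Γ] [TopologicalSpace Γ]
    [IsTopologicalGroup Γ] (μ : Γ → ℝ) (C : ℝ) (hC : 0 ≤ C)
    (hquasi : ∀ x y : Γ, |μ (x * y) - μ x - μ y| ≤ C)
    (hhom : ∀ (x : Γ) (n : ℤ), μ (x ^ n) = n * μ x) :
    Continuous μ ↔ ∃ U ∈ nhds (1 : Γ), ∃ K : ℝ, ∀ x ∈ U, |μ x| ≤ K :=
  shtern_continuity_criterion_general μ C hquasi hhom
end

section
/- Let Γ be a topological group, μ : Γ → ℝ a homogeneous quasi-morphism bounded by K on an open neighborhood U of the identity, and suppose additionally that for each g ∈ Γ and each p ≥ 1 the set V_p(g) = { h ∈ Γ : hᵖ ∈ gᵖ U } is a neighborhood of g. Then μ is continuous at every point of Γ. -/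
/-! If `h ^ p = g ^ p * u` with `u ∈ U`, homogeneity and the defect bound give
`p * |μ h - μ g| ≤ C + K`, so `μ` oscillates by at most `(C + K) / p` on the neighbourhood
`V_p(g)` of `g`. -/

open Filter Topology

lemma continuousAt_of_eventually_abs_sub_le_div {X : Type*} [TopologicalSpace X] {f : X → ℝ}
    {x : X} (B : ℝ) (h : ∀ n : ℕ, 1 ≤ n → ∀ᶠ y in 𝓝 x, |f y - f x| ≤ B / n) :
    ContinuousAt f x := by
  rw [ContinuousAt, Metric.tendsto_nhds]
  intro ε hε
  obtain ⟨n, hn⟩ := exists_nat_gt (B / ε)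
  have hn0 : (0 : ℝ) < (n + 1 : ℕ) := by positivity
  have hBn : B / (n + 1 : ℕ) < ε := by
    rw [div_lt_iff₀ hn0]
    rw [div_lt_iff₀ hε] at hn
    push_cast; nlinarith
  filter_upwards [h (n + 1) n.succ_pos] with y hy
  rw [Real.dist_eq]
  exact hy.trans_lt hBn

lemma abs_sub_le_of_pow_eq_mul {G : Type*} [Monoid G] {μ : G → ℝ} {C : ℝ}
    (hquasi : ∀ x y : G, |μ (x * y) - μ x - μ y| ≤ C)
    (hhom : ∀ (x : G) (n : ℕ), μ (x ^ n) = n * μ x)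
    {g h u : G} {n : ℕ} (hn : 1 ≤ n) (hgh : h ^ n = g ^ n * u) :
    |μ h - μ g| ≤ (C + |μ u|) / n := by
  have hn0 : (0 : ℝ) < n := by exact_mod_cast hn
  rw [le_div_iff₀ hn0]
  have hdefect := hquasi (g ^ n) u
  rw [← hgh, hhom, hhom] at hdefect
  calc |μ h - μ g| * n = |(n * μ h - n * μ g - μ u) + μ u| := by
        rw [← abs_of_pos hn0, ← abs_mul, abs_of_pos hn0]; ring_nf
    _ ≤ |n * μ h - n * μ g - μ u| + |μ u| := abs_add_le _ _
    _ ≤ C + |μ u| := by gcongr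

theorem shtern_continuity_general {Γ : Type*} [Group Γ] [TopologicalSpace Γ]
    (μ : Γ → ℝ) (C K : ℝ)
    (hquasi : ∀ x y : Γ, |μ (x * y) - μ x - μ y| ≤ C)
    (hhom : ∀ (x : Γ) (n : ℤ), μ (x ^ n) = n * μ x)
    (U : Set Γ)
    (hK : ∀ u ∈ U, |μ u| ≤ K)
    (hV : ∀ (g : Γ) (p : ℕ), 1 ≤ p →
      {h : Γ | ∃ u ∈ U, h ^ p = g ^ p * u} ∈ nhds g) :
    Continuous μ := by
  have hhom_nat (x : Γ) (n : ℕ) : μ (x ^ n) = n * μ x := by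
    simpa using hhom x n
  refine continuous_iff_continuousAt.2 fun g ↦ continuousAt_of_eventually_abs_sub_le_div (C + K) ?_
  intro p hp
  filter_upwards [hV g p hp] with h ⟨u, hu, hhu⟩
  calc |μ h - μ g| ≤ (C + |μ u|) / p := abs_sub_le_of_pow_eq_mul hquasi hhom_nat hp hhu
    _ ≤ (C + K) / p := by gcongr; exact hK u hu

/-- A homogeneous quasi-morphism bounded near the identity, for which each set
`V_p(g)` is a neighborhood of `g`, is continuous everywhere. -/
theorem shtern_continuity {Γ : Type*} [Group Γ] [TopologicalSpace Γ] [IsTopologicalGroup Γ]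
    (μ : Γ → ℝ) (C K : ℝ) (hC : 0 ≤ C)
    (hquasi : ∀ x y : Γ, |μ (x * y) - μ x - μ y| ≤ C)
    (hhom : ∀ (x : Γ) (n : ℤ), μ (x ^ n) = n * μ x)
    (U : Set Γ) (hUopen : IsOpen U) (hU1 : (1 : Γ) ∈ U)
    (hK : ∀ u ∈ U, |μ u| ≤ K)
    (hV : ∀ (g : Γ) (p : ℕ), 1 ≤ p →
      {h : Γ | ∃ u ∈ U, h ^ p = g ^ p * u} ∈ nhds g) :
    Continuous μ :=
  shtern_continuity_general μ C K hquasi hhom U hK hV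
end

section
/- Let Λ be a topological group, Γ ⊆ Λ a dense subgroup, and μ : Γ → ℝ a continuous homogeneous quasi-morphism. Then there exists a continuous homogeneous quasi-morphism μ' : Λ → ℝ extending μ, i.e., μ'(g) = μ(g) for all g ∈ Γ. -/
/-!
For `a, b` in `Γ` the quasi-morphism inequality applied to `a ^ n * (b ^ n)⁻¹` and `b ^ n`, together
with homogeneity, gives `n * |μ a - μ b| ≤ C + |μ (a ^ n * (b ^ n)⁻¹)|`. Near a point `g` of `Λ`
the element `a ^ n * (b ^ n)⁻¹` is close to `1`, where `μ` is small by continuity; hence the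
oscillation of `μ` near `g` is at most `(C + 1) / n` for every `n`, so `μ` extends continuously
to `Λ`. The quasi-morphism inequality and homogeneity are closed conditions, so they pass from the
dense subgroup to the whole group.
-/

open Filter Topology

theorem natCast_mul_abs_sub_le {G : Type*} [Group G] {μ : G → ℝ} {C : ℝ}
    (hquasi : ∀ x y, |μ (x * y) - μ x - μ y| ≤ C) (hhom : ∀ x (n : ℕ), μ (x ^ n) = n * μ x)
    (a b : G) (n : ℕ) : n * |μ a - μ b| ≤ C + |μ (a ^ n * (b ^ n)⁻¹)| := by
  have h := hquasi (a ^ n * (b ^ n)⁻¹) (b ^ n)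
  rw [inv_mul_cancel_right, hhom, hhom] at h
  calc (n : ℝ) * |μ a - μ b| = |n * (μ a - μ b)| := by rw [abs_mul, Nat.abs_cast]
    _ = |(n * μ a - μ (a ^ n * (b ^ n)⁻¹) - n * μ b) + μ (a ^ n * (b ^ n)⁻¹)| := by ring_nf
    _ ≤ C + |μ (a ^ n * (b ^ n)⁻¹)| := (abs_add_le _ _).trans (by gcongr)

section DenseSubgroup

variable {Λ : Type*} [Group Λ] [TopologicalSpace Λ] [IsTopologicalGroup Λ] {Γ : Subgroup Λ}

theorem exists_mem_nhds_natCast_mul_abs_sub_le {μ : Γ → ℝ} {C : ℝ}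
    (hquasi : ∀ x y, |μ (x * y) - μ x - μ y| ≤ C) (hhom : ∀ x (n : ℕ), μ (x ^ n) = n * μ x)
    (hcont : ContinuousAt μ 1) (g : Λ) (n : ℕ) :
    ∃ V ∈ 𝓝 g, ∀ a b : Γ, (a : Λ) ∈ V → (b : Λ) ∈ V → n * |μ a - μ b| ≤ C + 1 := by
  have hμ_one : μ 1 = 0 := by simpa using hhom 1 0
  obtain ⟨U, hU, hμU⟩ : ∃ U ∈ 𝓝 (1 : Λ), ∀ c : Γ, (c : Λ) ∈ U → |μ c| < 1 := by
    have h := hcont (Metric.ball_mem_nhds (μ 1) one_pos)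
    rw [mem_map, nhds_induced, mem_comap] at h
    obtain ⟨U, hU, hUμ⟩ := h
    exact ⟨U, hU, fun c hc => by simpa [hμ_one, Real.dist_eq] using hUμ hc⟩
  have hpow : Tendsto (fun p : Λ × Λ => p.1 ^ n * (p.2 ^ n)⁻¹) (𝓝 g ×ˢ 𝓝 g) (𝓝 1) := by
    rw [← nhds_prod_eq]
    simpa using (show Continuous (fun p : Λ × Λ => p.1 ^ n * (p.2 ^ n)⁻¹) by fun_prop).tendsto (g, g)
  obtain ⟨V, hV, hVU⟩ := mem_prod_self_iff.1 (hpow hU)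
  refine ⟨V, hV, fun a b ha hb => ?_⟩
  have hab : |μ (a ^ n * (b ^ n)⁻¹)| < 1 := hμU _ (by simpa using hVU (Set.mk_mem_prod ha hb))
  linarith [natCast_mul_abs_sub_le hquasi hhom a b n]

theorem exists_tendsto_comap_nhds {μ : Γ → ℝ} {C : ℝ} (hdense : Dense (Γ : Set Λ))
    (hquasi : ∀ x y, |μ (x * y) - μ x - μ y| ≤ C) (hhom : ∀ x (n : ℕ), μ (x ^ n) = n * μ x)
    (hcont : ContinuousAt μ 1) (g : Λ) :
    ∃ c, Tendsto μ (comap (↑) (𝓝 g)) (𝓝 c) := by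
  have := hdense.comap_val_nhds_neBot g
  suffices Cauchy (map μ (comap (↑) (𝓝 g))) from CompleteSpace.complete this
  refine Metric.cauchy_iff.2 ⟨inferInstance, fun ε hε => ?_⟩
  have hC : 0 ≤ C := (abs_nonneg _).trans (hquasi 1 1)
  obtain ⟨n, hn⟩ := exists_nat_gt ((C + 1) / ε)
  have hn_pos : (0 : ℝ) < n := (div_nonneg (by linarith) hε.le).trans_lt hn
  obtain ⟨V, hV, hμV⟩ := exists_mem_nhds_natCast_mul_abs_sub_le hquasi hhom hcont g n
  refine ⟨μ '' ((↑) ⁻¹' V), image_mem_map (preimage_mem_comap hV), ?_⟩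
  rintro _ ⟨a, ha, rfl⟩ _ ⟨b, hb, rfl⟩
  rw [div_lt_iff₀ hε] at hn
  exact lt_of_mul_lt_mul_left ((hμV a b ha hb).trans_lt hn) hn_pos.le

end DenseSubgroup

theorem Dense.abs_map_mul_sub_le {M : Type*} [TopologicalSpace M] [Mul M] [ContinuousMul M]
    {s : Set M} (hs : Dense s) {ν : M → ℝ} (hν : Continuous ν) {C : ℝ}
    (h : ∀ x ∈ s, ∀ y ∈ s, |ν (x * y) - ν x - ν y| ≤ C) (x y : M) :
    |ν (x * y) - ν x - ν y| ≤ C :=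
  (hs.prod hs).induction (P := fun p : M × M => |ν (p.1 * p.2) - ν p.1 - ν p.2| ≤ C)
    (fun p hp => h _ hp.1 _ hp.2) (isClosed_le (by fun_prop) continuous_const) (x, y)

theorem Dense.map_zpow_eq {G : Type*} [Group G] [TopologicalSpace G] [IsTopologicalGroup G]
    {s : Set G} (hs : Dense s) {ν : G → ℝ} (hν : Continuous ν)
    (h : ∀ x ∈ s, ∀ n : ℤ, ν (x ^ n) = n * ν x) (x : G) (n : ℤ) : ν (x ^ n) = n * ν x :=
  hs.induction (P := fun x => ν (x ^ n) = n * ν x) (fun x hx => h x hx n)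
    (isClosed_eq (by fun_prop) (by fun_prop)) x

/-- A continuous homogeneous quasi-morphism on a dense subgroup extends to a
continuous homogeneous quasi-morphism on the whole topological group. -/
theorem extend_continuous_qm {Λ : Type*} [Group Λ] [TopologicalSpace Λ] [IsTopologicalGroup Λ]
    (Γ : Subgroup Λ) (hdense : Dense (Γ : Set Λ))
    (μ : Γ → ℝ) (C : ℝ) (hC : 0 ≤ C)
    (hquasi : ∀ x y : Γ, |μ (x * y) - μ x - μ y| ≤ C)
    (hhom : ∀ (x : Γ) (n : ℤ), μ (x ^ n) = n * μ x)
    (hcont : Continuous μ) :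
    ∃ (μ' : Λ → ℝ) (C' : ℝ), 0 ≤ C' ∧
      (∀ x y : Λ, |μ' (x * y) - μ' x - μ' y| ≤ C') ∧
      (∀ (x : Λ) (n : ℤ), μ' (x ^ n) = n * μ' x) ∧
      Continuous μ' ∧
      (∀ g : Γ, μ' (g : Λ) = μ g) := by
  have hhom_nat : ∀ x (n : ℕ), μ (x ^ n) = n * μ x := fun x n => by exact_mod_cast hhom x n
  have hext : Continuous (hdense.extend μ) := hdense.continuous_extend
    (exists_tendsto_comap_nhds hdense hquasi hhom_nat hcont.continuousAt)
  have hres : ∀ x (hx : x ∈ Γ), hdense.extend μ x = μ ⟨x, hx⟩ :=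
    fun x hx => hdense.extend_eq hcont ⟨x, hx⟩
  refine ⟨hdense.extend μ, C, hC, hdense.abs_map_mul_sub_le hext fun x hx y hy => ?_,
    hdense.map_zpow_eq hext fun x hx n => ?_, hext, fun g => hres g g.2⟩
  · rw [hres _ (Γ.mul_mem hx hy), hres x hx, hres y hy]
    exact hquasi ⟨x, hx⟩ ⟨y, hy⟩
  · rw [hres _ (Γ.zpow_mem hx n), hres x hx]
    exact hhom ⟨x, hx⟩ n
end

section
/- Let Λ be a topological group, Γ ⊆ Λ a dense subgroup, μ : Γ → ℝ a homogeneous quasi-morphism bounded by C on U = U' ∩ Γ for some open U' ⊆ Λ containing 1, and let O be a symmetric open neighborhood of 1 in Λ with O·O ⊆ U'. Fix g ∈ Λ and a sequence (h_k) in Γ with h_k ∈ V_1(g) ∩ … ∩ V_k(g), where V_p(g) = { h ∈ Λ : hᵖ ∈ gᵖ O }. Then for all k₁, k₂ ≥ p ≥ 1, |μ(h_{k₁}) − μ(h_{k₂})| ≤ (C + C(μ))/p; in particular (μ(h_k)) is a Cauchy sequence in ℝ. -/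
/-!
Both `h k₁ ^ p` and `h k₂ ^ p` lie in `g ^ p * O`, so `(h k₂ ^ p)⁻¹ * h k₁ ^ p ∈ O⁻¹ * O ⊆ U'`
and `μ` is bounded by `C` there. By homogeneity and the quasi-morphism inequality, `μ` of this
element differs from `p * (μ (h k₁) - μ (h k₂))` by at most `C(μ)`, which gives the estimate;
the bound `(C + C(μ)) / p` tends to `0`, so the sequence is Cauchy.
-/

open scoped Pointwise

section QuasiMorphism

variable {G : Type*} [Group G] {μ : G → ℝ} {Cμ : ℝ}

theorem abs_sub_le_abs_inv_mul_add_of_quasi (hquasi : ∀ x y, |μ (x * y) - μ x - μ y| ≤ Cμ)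
    (hinv : ∀ x, μ x⁻¹ = -μ x) (a b : G) : |μ a - μ b| ≤ |μ (b⁻¹ * a)| + Cμ := by
  have hq := hquasi b⁻¹ a
  rw [hinv] at hq
  calc |μ a - μ b| = |μ (b⁻¹ * a) - (μ (b⁻¹ * a) - -μ b - μ a)| := by ring_nf
    _ ≤ |μ (b⁻¹ * a)| + |μ (b⁻¹ * a) - -μ b - μ a| := abs_sub _ _
    _ ≤ |μ (b⁻¹ * a)| + Cμ := by gcongr

theorem abs_sub_le_div_of_homogeneous_quasi (hquasi : ∀ x y, |μ (x * y) - μ x - μ y| ≤ Cμ)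
    (hhom : ∀ (x : G) (n : ℤ), μ (x ^ n) = n * μ x) {p : ℕ} (hp : 0 < p) (a b : G) :
    |μ a - μ b| ≤ (|μ ((b ^ p)⁻¹ * a ^ p)| + Cμ) / p := by
  have hinv (x : G) : μ x⁻¹ = -μ x := by simpa using hhom x (-1)
  have hpow (x : G) : μ (x ^ p) = p * μ x := by exact_mod_cast hhom x p
  have hp' : (0 : ℝ) < p := by exact_mod_cast hp
  have key := abs_sub_le_abs_inv_mul_add_of_quasi hquasi hinv (a ^ p) (b ^ p)
  rw [hpow, hpow, ← mul_sub, abs_mul, Nat.abs_cast] at key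
  rw [le_div_iff₀ hp', mul_comm]
  exact key

end QuasiMorphism

theorem inv_mul_mem_mul_of_eq_mul {G : Type*} [Group G] {O : Set G} (hOsymm : O⁻¹ = O)
    {a b c o₁ o₂ : G} (ho₁ : o₁ ∈ O) (ho₂ : o₂ ∈ O) (ha : a = c * o₁) (hb : b = c * o₂) :
    b⁻¹ * a ∈ O * O := by
  have hinv : o₂⁻¹ ∈ O := hOsymm ▸ Set.inv_mem_inv.mpr ho₂
  simpa [ha, hb, mul_assoc] using Set.mul_mem_mul hinv ho₁

theorem cauchySeq_of_abs_sub_le_div {u : ℕ → ℝ} (K : ℝ)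
    (hu : ∀ p k₁ k₂ : ℕ, 1 ≤ p → p ≤ k₁ → p ≤ k₂ → |u k₁ - u k₂| ≤ K / p) : CauchySeq u := by
  rw [← cauchySeq_shift 1]
  refine cauchySeq_of_le_tendsto_0 (fun N : ℕ => K * (1 / ((N : ℝ) + 1))) (fun n m N hn hm => ?_)
    (by simpa using tendsto_one_div_add_atTop_nhds_zero_nat.const_mul K)
  simpa [Real.dist_eq, div_eq_mul_inv] using hu (N + 1) (n + 1) (m + 1) (by omega) (by omega)
    (by omega)

theorem extension_cauchy_estimate_general {Λ : Type*} [Group Λ] (Γ : Subgroup Λ)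
    (μ : Γ → ℝ) (C Cμ : ℝ)
    (hquasi : ∀ x y : Γ, |μ (x * y) - μ x - μ y| ≤ Cμ)
    (hhom : ∀ (x : Γ) (n : ℤ), μ (x ^ n) = n * μ x)
    (U' : Set Λ)
    (hbound : ∀ x : Γ, (x : Λ) ∈ U' → |μ x| ≤ C)
    (O : Set Λ) (hOsymm : O⁻¹ = O)
    (hOO : O * O ⊆ U')
    (g : Λ) (h : ℕ → Γ)
    (hh : ∀ k p : ℕ, 1 ≤ p → p ≤ k → ∃ o ∈ O, ((h k : Λ)) ^ p = g ^ p * o) :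
    (∀ p k₁ k₂ : ℕ, 1 ≤ p → p ≤ k₁ → p ≤ k₂ →
        |μ (h k₁) - μ (h k₂)| ≤ (C + Cμ) / p) ∧
      CauchySeq (fun k => μ (h k)) := by
  have estimate (p k₁ k₂ : ℕ) (hp : 1 ≤ p) (h₁ : p ≤ k₁) (h₂ : p ≤ k₂) :
      |μ (h k₁) - μ (h k₂)| ≤ (C + Cμ) / p := by
    obtain ⟨o₁, ho₁, he₁⟩ := hh k₁ p hp h₁
    obtain ⟨o₂, ho₂, he₂⟩ := hh k₂ p hp h₂
    have hU' : (((h k₂ ^ p)⁻¹ * h k₁ ^ p : Γ) : Λ) ∈ U' := by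
      push_cast
      exact hOO (inv_mul_mem_mul_of_eq_mul hOsymm ho₁ ho₂ he₁ he₂)
    calc |μ (h k₁) - μ (h k₂)| ≤ (|μ ((h k₂ ^ p)⁻¹ * h k₁ ^ p)| + Cμ) / p :=
          abs_sub_le_div_of_homogeneous_quasi hquasi hhom hp _ _
      _ ≤ (C + Cμ) / p := by gcongr; exact hbound _ hU'
  exact ⟨estimate, cauchySeq_of_abs_sub_le_div (C + Cμ) estimate⟩

/-- The Cauchy estimate in the extension of a continuous homogeneous
quasi-morphism from a dense subgroup. -/
theorem extension_cauchy_estimate {Λ : Type*} [Group Λ] [TopologicalSpace Λ]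
    [IsTopologicalGroup Λ] (Γ : Subgroup Λ) (hdense : Dense (Γ : Set Λ))
    (μ : Γ → ℝ) (C Cμ : ℝ) (hC : 0 ≤ C) (hCμ : 0 ≤ Cμ)
    (hquasi : ∀ x y : Γ, |μ (x * y) - μ x - μ y| ≤ Cμ)
    (hhom : ∀ (x : Γ) (n : ℤ), μ (x ^ n) = n * μ x)
    (U' : Set Λ) (hU'open : IsOpen U') (hU'1 : (1 : Λ) ∈ U')
    (hbound : ∀ x : Γ, (x : Λ) ∈ U' → |μ x| ≤ C)
    (O : Set Λ) (hOopen : IsOpen O) (hO1 : (1 : Λ) ∈ O) (hOsymm : O⁻¹ = O)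
    (hOO : O * O ⊆ U')
    (g : Λ) (h : ℕ → Γ)
    (hh : ∀ k p : ℕ, 1 ≤ p → p ≤ k → ∃ o ∈ O, ((h k : Λ)) ^ p = g ^ p * o) :
    (∀ p k₁ k₂ : ℕ, 1 ≤ p → p ≤ k₁ → p ≤ k₂ →
        |μ (h k₁) - μ (h k₂)| ≤ (C + Cμ) / p) ∧
      CauchySeq (fun k => μ (h k)) :=
  extension_cauchy_estimate_general Γ μ C Cμ hquasi hhom U' hbound O hOsymm hOO g h hh
end

section
/- Let Γ be a topological group, μ : Γ → ℝ a homogeneous quasi-morphism, and suppose there exist a neighborhood 𝒰 of the identity and an integer N ≥ 1 together with a family of subgroups (H_j) such that μ vanishes on each H_j, and every g ∈ 𝒰 can be written as a product of at most N elements each lying in some H_j. Then μ is bounded by (N−1)·C(μ) on 𝒰, and hence μ is continuous. -/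
/-!
Splitting `g ∈ 𝒰` into at most `N` factors on which `μ` vanishes and applying the
quasi-morphism inequality `N - 1` times bounds `|μ g|` by `(N - 1) C`. For continuity at `g`,
homogeneity gives `n |μ x - μ g| = |μ (xⁿ) - μ (gⁿ)| ≤ C + |μ (xⁿ g⁻ⁿ)|`, and `xⁿ g⁻ⁿ ∈ 𝒰`
for `x` close to `g`, so `|μ x - μ g| ≤ (C + (N - 1) C) / n` for every `n`.
-/

open Topology

def IsQuasimorphism {G : Type*} [Mul G] (μ : G → ℝ) (C : ℝ) : Prop :=
  ∀ x y : G, |μ (x * y) - μ x - μ y| ≤ C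

namespace IsQuasimorphism

variable {G : Type*} {μ : G → ℝ} {C : ℝ}

theorem nonneg [Mul G] [Nonempty G] (hμ : IsQuasimorphism μ C) : 0 ≤ C :=
  let x := Classical.arbitrary G
  (abs_nonneg _).trans (hμ x x)

theorem abs_list_prod_sub_sum_le [Monoid G] (hμ : IsQuasimorphism μ C) (x : G) (l : List G) :
    |μ (x :: l).prod - ((x :: l).map μ).sum| ≤ l.length * C := by
  induction l generalizing x with
  | nil => simp
  | cons y l ih =>
    have hstep := hμ x (y :: l).prod
    have hrest := ih y
    simp only [List.prod_cons, List.map_cons, List.sum_cons, List.length_cons] at hstep hrest ⊢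
    rw [abs_le] at hstep hrest ⊢
    push_cast
    constructor <;> linarith

theorem abs_sub_le [Group G] (hμ : IsQuasimorphism μ C) (x y : G) :
    |μ x - μ y| ≤ C + |μ (x * y⁻¹)| := by
  have h := hμ (x * y⁻¹) y
  rw [inv_mul_cancel_right] at h
  calc |μ x - μ y| = |(μ x - μ (x * y⁻¹) - μ y) + μ (x * y⁻¹)| := by ring_nf
    _ ≤ |μ x - μ (x * y⁻¹) - μ y| + |μ (x * y⁻¹)| := abs_add_le _ _
    _ ≤ C + |μ (x * y⁻¹)| := by gcongr

theorem abs_le_of_list_prod [Monoid G] (hμ : IsQuasimorphism μ C) (h1 : μ 1 = 0)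
    {N : ℕ} (hN : 1 ≤ N) {l : List G} (hlen : l.length ≤ N) (hl : ∀ x ∈ l, μ x = 0) :
    |μ l.prod| ≤ ((N : ℝ) - 1) * C := by
  have hC : 0 ≤ C := hμ.nonneg
  have hN' : (1 : ℝ) ≤ N := by exact_mod_cast hN
  cases l with
  | nil => simpa [h1] using mul_nonneg (sub_nonneg.2 hN') hC
  | cons x t =>
    have hsum : ((x :: t).map μ).sum = 0 :=
      List.sum_eq_zero fun y hy => by
        obtain ⟨z, hz, rfl⟩ := List.mem_map.1 hy
        exact hl z hz
    have ht : (t.length : ℝ) ≤ N - 1 := by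
      have : t.length + 1 ≤ N := hlen
      rw [le_sub_iff_add_le]
      exact_mod_cast this
    calc |μ (x :: t).prod| ≤ t.length * C := by
          simpa only [hsum, sub_zero] using hμ.abs_list_prod_sub_sum_le x t
      _ ≤ ((N : ℝ) - 1) * C := by gcongr

/-- Shtern's criterion. -/
theorem continuous_of_bounded_nhds_one [Group G] [TopologicalSpace G] [ContinuousMul G]
    (hμ : IsQuasimorphism μ C) (hhom : ∀ (x : G) (n : ℤ), μ (x ^ n) = n * μ x)
    {U : Set G} (hU : U ∈ 𝓝 (1 : G)) {B : ℝ} (hB : ∀ g ∈ U, |μ g| ≤ B) : Continuous μ := by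
  have hC : 0 ≤ C := hμ.nonneg
  have hpow : ∀ (x : G) (n : ℕ), μ (x ^ n) = n * μ x := fun x n => by
    simpa using hhom x n
  refine continuous_iff_continuousAt.2 fun g => Metric.tendsto_nhds.2 fun ε hε => ?_
  obtain ⟨n, hn⟩ := exists_nat_gt ((C + B) / ε)
  have hB0 : 0 ≤ B := (abs_nonneg _).trans (hB 1 (mem_of_mem_nhds hU))
  have hn0 : (0 : ℝ) < n := lt_of_le_of_lt (by positivity) hn
  have hnear : ∀ᶠ x in 𝓝 g, x ^ n * (g ^ n)⁻¹ ∈ U := by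
    have hcont : ContinuousAt (fun x : G => x ^ n * (g ^ n)⁻¹) g := by fun_prop
    exact hcont (by simpa using hU)
  filter_upwards [hnear] with x hx
  have hscaled : n * |μ x - μ g| ≤ C + B := by
    calc n * |μ x - μ g| = |μ (x ^ n) - μ (g ^ n)| := by
          rw [hpow, hpow, ← mul_sub, abs_mul, Nat.abs_cast]
      _ ≤ C + |μ (x ^ n * (g ^ n)⁻¹)| := hμ.abs_sub_le _ _
      _ ≤ C + B := by gcongr; exact hB _ hx
  rw [Real.dist_eq]
  calc |μ x - μ g| ≤ (C + B) / n := by rw [le_div_iff₀ hn0]; linarith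
    _ < ε := by rwa [div_lt_iff₀ hn0, mul_comm, ← div_lt_iff₀ hε]

end IsQuasimorphism

theorem qm_continuous_of_fragmentation_general {Γ : Type*} [Group Γ] [TopologicalSpace Γ]
    [IsTopologicalGroup Γ] {ι : Type*} (μ : Γ → ℝ) (C : ℝ)
    (hquasi : ∀ x y : Γ, |μ (x * y) - μ x - μ y| ≤ C)
    (hhom : ∀ (x : Γ) (n : ℤ), μ (x ^ n) = n * μ x)
    (U : Set Γ) (hU : U ∈ nhds (1 : Γ)) (N : ℕ) (hN : 1 ≤ N)
    (H : ι → Subgroup Γ) (hvanish : ∀ j, ∀ x ∈ H j, μ x = 0)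
    (hfrag : ∀ g ∈ U, ∃ l : List Γ, l.length ≤ N ∧
      (∀ x ∈ l, ∃ j, x ∈ H j) ∧ l.prod = g) :
    (∀ g ∈ U, |μ g| ≤ ((N : ℝ) - 1) * C) ∧ Continuous μ := by
  have hμ : IsQuasimorphism μ C := hquasi
  have hbound : ∀ g ∈ U, |μ g| ≤ ((N : ℝ) - 1) * C := by
    intro g hg
    obtain ⟨l, hlen, hmem, rfl⟩ := hfrag g hg
    refine hμ.abs_le_of_list_prod (by simpa using hhom 1 0) hN hlen fun x hx => ?_
    obtain ⟨j, hj⟩ := hmem x hx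
    exact hvanish j x hj
  exact ⟨hbound, hμ.continuous_of_bounded_nhds_one hhom hU hbound⟩

/-- Bounded fragmentation near the identity into subgroups on which a
homogeneous quasi-morphism vanishes yields boundedness near the identity and
hence continuity. -/
theorem qm_continuous_of_fragmentation {Γ : Type*} [Group Γ] [TopologicalSpace Γ]
    [IsTopologicalGroup Γ] {ι : Type*} (μ : Γ → ℝ) (C : ℝ) (hC : 0 ≤ C)
    (hquasi : ∀ x y : Γ, |μ (x * y) - μ x - μ y| ≤ C)
    (hhom : ∀ (x : Γ) (n : ℤ), μ (x ^ n) = n * μ x)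
    (U : Set Γ) (hU : U ∈ nhds (1 : Γ)) (N : ℕ) (hN : 1 ≤ N)
    (H : ι → Subgroup Γ) (hvanish : ∀ j, ∀ x ∈ H j, μ x = 0)
    (hfrag : ∀ g ∈ U, ∃ l : List Γ, l.length ≤ N ∧
      (∀ x ∈ l, ∃ j, x ∈ H j) ∧ l.prod = g) :
    (∀ g ∈ U, |μ g| ≤ ((N : ℝ) - 1) * C) ∧ Continuous μ :=
  qm_continuous_of_fragmentation_general μ C hquasi hhom U hU N hN H hvanish hfrag
end
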